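/- Let K be a field, n ≥ 1, and ℓ ∈ ℤ. Working in the Laurent polynomial ring L = K[x_1^{±1},…,x_n^{±1}], the following holds: for every r ≥ 1 and every a = (a_1,…,a_n) ∈ ℤ^n with a_i ≤ −1 for all i, the identity E_r(x^a) = binom((a_1+⋯+a_n+n) − ℓ, r)·x^a holds (binomial taken via its image in K) if and only if ℓ = n. (Since the graded injective hull *E of K[x_1,…,x_n]/(x_1,…,x_n) has K-basis the monomials x^a with all a_i ≤ −1, graded so that x^a has degree a_1+⋯+a_n+n, this expresses that *E(ℓ) is Eulerian if and only if ℓ = n.) -/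

import Mathlib

/-- The divided-power partial derivative `∂_i^{[j]}` on the Laurent polynomial ring
`K[x_1^{±1},…,x_n^{±1}]`, realized as the monoid algebra of `ℤ^n` over `K`; it is determined
on Laurent monomials by `∂_i^{[j]}(x^a) = binom(a_i, j) • x^{a - j·e_i}`, where `binom` is the
generalized (integer) binomial coefficient `Ring.choose`. -/
noncomputable def ldpDeriv (K : Type*) [CommRing K] {n : ℕ} (i : Fin n) (j : ℕ) :
    AddMonoidAlgebra K (Fin n → ℤ) →ₗ[K] AddMonoidAlgebra K (Fin n → ℤ) :=
  Finsupp.lsum K (fun a : Fin n → ℤ =>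
    ((Ring.choose (a i) j : ℤ) : K) •
      (AddMonoidAlgebra.lsingle (a - Pi.single i (j : ℤ)) : K →ₗ[K] AddMonoidAlgebra K (Fin n → ℤ)))
    ∘ₗ (AddMonoidAlgebra.coeffLinearEquiv K).toLinearMap

/-- The `r`-th Euler operator `E_r = Σ_{i_1+⋯+i_n=r} x^{(i_1,…,i_n)} ∂_1^{[i_1]}⋯∂_n^{[i_n]}`
on the Laurent polynomial ring `K[x_1^{±1},…,x_n^{±1}]`. -/
noncomputable def leulerOp (K : Type*) [CommRing K] (n : ℕ) (r : ℕ) :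
    AddMonoidAlgebra K (Fin n → ℤ) →ₗ[K] AddMonoidAlgebra K (Fin n → ℤ) :=
  ∑ c ∈ Finset.Nat.antidiagonalTuple n r,
    LinearMap.mulLeft K (AddMonoidAlgebra.single (fun t => (c t : ℤ)) (1 : K)) ∘ₗ
      ((List.finRange n).map fun i => ldpDeriv K i (c i)).prod
/-!
By the multivariate Chu–Vandermonde identity, `E_r` acts on every Laurent monomial `x^a` as
multiplication by `binom(a_1 + ⋯ + a_n, r)`. Evaluating at `x^(-1,…,-1)`, the condition becomes
`binom(-n, r) = binom(-ℓ, r)` in `K` for all `r ≥ 1`. In characteristic zero `r = 1` already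
gives `ℓ = n`. In characteristic `p`, write `ℓ - n = p^N u` with `p ∤ u`: since `binom(p^N, j)`
vanishes mod `p` for `0 < j < p^N`, Vandermonde gives `binom(x + p^N u, p^N) ≡ binom(x, p^N) + u`,
so the coefficients at `r = p^N` differ by `u ≢ 0`.
-/

open Finset

theorem Ring.choose_sum_eq_sum_piAntidiag {R ι : Type*} [CommRing R] [BinomialRing R]
    [DecidableEq ι] (s : Finset ι) (x : ι → R) (r : ℕ) :
    Ring.choose (∑ i ∈ s, x i) r = ∑ c ∈ s.piAntidiag r, ∏ i ∈ s, Ring.choose (x i) (c i) := by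
  induction s using Finset.cons_induction generalizing r with
  | empty => by_cases hr : r = 0 <;> simp [Ring.choose_zero_ite, hr]
  | cons i s hi ih =>
    rw [sum_cons, Ring.add_choose_eq r (Commute.all _ _), piAntidiag_cons hi, sum_disjiUnion]
    refine sum_congr rfl fun p _ => ?_
    rw [ih, mul_sum, sum_map]
    refine sum_congr rfl fun c hc => ?_
    have hci : c i = 0 := by
      by_contra h
      exact hi ((mem_piAntidiag.mp hc).2 i h)
    have hcs : ∀ t ∈ s, t ≠ i := fun t ht h => hi (h ▸ ht)
    rw [prod_cons]
    simp only [addRightEmbedding_apply, Pi.add_apply, hci, zero_add]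
    congr 1
    exact prod_congr rfl fun t ht => by simp [hcs t ht]

section CharP

variable {R : Type*} [Ring R] (p : ℕ) [Fact p.Prime] [CharP R p]

theorem Int.cast_choose_add_prime_pow (y : ℤ) (N : ℕ) :
    ((Ring.choose (y + (p : ℤ) ^ N) (p ^ N) : ℤ) : R) = Ring.choose y (p ^ N) + 1 := by
  have hp : p.Prime := Fact.out
  have hchoose (j : ℕ) : Ring.choose ((p : ℤ) ^ N) j = (p ^ N).choose j := by
    rw [← Nat.cast_pow, Ring.choose_natCast]
  rw [Ring.add_choose_eq _ (Commute.all _ _), Int.cast_sum,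
    sum_eq_add_of_mem (p ^ N, 0) (0, p ^ N) (by simp) (by simp) (by simp [hp.ne_zero])]
  · simp [hchoose]
  · rintro ⟨i, j⟩ hij ⟨hi, hj⟩
    rw [HasAntidiagonal.mem_antidiagonal] at hij
    simp only [ne_eq, Prod.mk.injEq] at hi hj
    have hdvd : p ∣ (p ^ N).choose j := hp.dvd_choose_pow (by omega) (by omega)
    rw [hchoose, Int.cast_mul, Int.cast_natCast, (CharP.cast_eq_zero_iff R p _).mpr hdvd, mul_zero]

theorem Int.cast_choose_add_prime_pow_mul (x m : ℤ) (N : ℕ) :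
    ((Ring.choose (x + (p : ℤ) ^ N * m) (p ^ N) : ℤ) : R) = Ring.choose x (p ^ N) + m := by
  induction m using Int.induction_on with
  | zero => simp
  | succ m ih =>
    rw [mul_add_one, ← add_assoc, Int.cast_choose_add_prime_pow, ih]
    push_cast
    abel
  | pred m ih =>
    have h := Int.cast_choose_add_prime_pow (R := R) p (x + (p : ℤ) ^ N * (-m - 1)) N
    rw [add_assoc, ← mul_add_one, sub_add_cancel, ih] at h
    rw [eq_sub_of_add_eq h.symm]
    push_cast
    abel

end CharP

theorem Int.eq_of_forall_cast_choose_eq {R : Type*} [Ring R] [IsDomain R] {x y : ℤ}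
    (h : ∀ r : ℕ, 1 ≤ r → ((Ring.choose x r : ℤ) : R) = Ring.choose y r) : x = y := by
  obtain ⟨p, _⟩ := CharP.exists R
  rcases CharP.char_is_prime_or_zero R p with hp | rfl
  · have := Fact.mk hp
    by_contra hne
    have hfin : FiniteMultiplicity (p : ℤ) (y - x) :=
      Int.finiteMultiplicity_iff.mpr ⟨by simpa using hp.ne_one, sub_ne_zero.mpr (Ne.symm hne)⟩
    obtain ⟨u, hu, hpu⟩ := hfin.exists_eq_pow_mul_and_not_dvd
    have key := Int.cast_choose_add_prime_pow_mul (R := R) p x u (multiplicity (p : ℤ) (y - x))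
    rw [← hu, add_sub_cancel, ← h _ (Nat.one_le_iff_ne_zero.mpr (pow_ne_zero _ hp.ne_zero)),
      left_eq_add, CharP.intCast_eq_zero_iff R p] at key
    exact hpu key
  · have := CharP.charP_to_charZero R
    simpa using h 1 le_rfl

section EulerOperator

variable {K : Type*} [CommRing K] {n : ℕ}

theorem ldpDeriv_single (i : Fin n) (j : ℕ) (a : Fin n → ℤ) (b : K) :
    ldpDeriv K i j (AddMonoidAlgebra.single a b) =
      AddMonoidAlgebra.single (a - Pi.single i (j : ℤ)) (((Ring.choose (a i) j : ℤ) : K) * b) := by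
  simp [ldpDeriv]

theorem list_prod_ldpDeriv_single (c : Fin n → ℕ) (a : Fin n → ℤ) (b : K) {l : List (Fin n)}
    (hl : l.Nodup) :
    (l.map fun i => ldpDeriv K i (c i)).prod (AddMonoidAlgebra.single a b) =
      AddMonoidAlgebra.single (a - fun t => if t ∈ l then (c t : ℤ) else 0)
        ((l.map fun i => ((Ring.choose (a i) (c i) : ℤ) : K)).prod * b) := by
  induction l with
  | nil =>
    simp only [List.map_nil, List.prod_nil, Module.End.one_apply, one_mul, List.not_mem_nil,
      if_false]
    rw [show (a - fun _ => (0 : ℤ)) = a from sub_zero a]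
  | cons i l ih =>
    obtain ⟨hi, hl⟩ := List.nodup_cons.mp hl
    have hai : (a - fun t => if t ∈ l then (c t : ℤ) else 0) i = a i := by simp [hi]
    have hshift : ((a - fun t => if t ∈ l then (c t : ℤ) else 0) - Pi.single i (c i : ℤ)) =
        a - fun t => if t ∈ i :: l then (c t : ℤ) else 0 := by
      funext t
      by_cases ht : t = i
      · subst ht
        simp [hi]
      · simp [ht]
    rw [List.map_cons, List.prod_cons, Module.End.mul_apply, ih hl, ldpDeriv_single, hai, hshift,
      List.map_cons, List.prod_cons, mul_assoc]

theorem leulerOp_single (r : ℕ) (a : Fin n → ℤ) (b : K) :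
    leulerOp K n r (AddMonoidAlgebra.single a b) =
      ((Ring.choose (∑ i, a i) r : ℤ) : K) • AddMonoidAlgebra.single a b := by
  have hterm (c : Fin n → ℕ) :
      (LinearMap.mulLeft K (AddMonoidAlgebra.single (fun t => (c t : ℤ)) (1 : K)) ∘ₗ
        ((List.finRange n).map fun i => ldpDeriv K i (c i)).prod) (AddMonoidAlgebra.single a b) =
        (∏ i, ((Ring.choose (a i) (c i) : ℤ) : K)) • AddMonoidAlgebra.single a b := by
    rw [LinearMap.comp_apply, list_prod_ldpDeriv_single c a b (List.nodup_finRange n),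
      LinearMap.mulLeft_apply, AddMonoidAlgebra.single_mul_single, AddMonoidAlgebra.smul_single',
      Fin.prod_univ_def]
    simp
  rw [leulerOp, LinearMap.sum_apply, sum_congr rfl fun c _ => hterm c, ← sum_smul,
    ← piAntidiag_univ_fin_eq_antidiagonalTuple, Ring.choose_sum_eq_sum_piAntidiag]
  simp

end EulerOperator

theorem shifted_E_eulerian_iff_general (K : Type*) [Field K] (n : ℕ) (ℓ : ℤ) :
    (∀ r : ℕ, 1 ≤ r → ∀ a : Fin n → ℤ, (∀ i, a i ≤ -1) →
        leulerOp K n r (AddMonoidAlgebra.single a (1 : K)) =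
          ((Ring.choose ((∑ i, a i) + n - ℓ) r : ℤ) : K) •
            AddMonoidAlgebra.single a (1 : K)) ↔ ℓ = n := by
  simp only [leulerOp_single, AddMonoidAlgebra.smul_single', mul_one,
    AddMonoidAlgebra.single_right_inj]
  constructor
  · intro H
    have hmonomial := fun r hr => H r hr (fun _ => -1) fun _ => le_rfl
    simp only [sum_const, card_univ, Fintype.card_fin, smul_neg, nsmul_eq_mul, mul_one,
      neg_add_cancel, zero_sub] at hmonomial
    exact neg_injective (Int.eq_of_forall_cast_choose_eq hmonomial).symm
  · rintro rfl r - a -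
    rw [add_sub_cancel_right]

/-- Let `K` be a field, `n ≥ 1`, and `ℓ ∈ ℤ`.  In the Laurent polynomial
ring `K[x_1^{±1},…,x_n^{±1}]`, the following holds: every `r ≥ 1` and every Laurent monomial
`x^a` with all `a_i ≤ −1` satisfy `E_r(x^a) = binom((a_1+⋯+a_n+n) − ℓ, r) • x^a` (generalized
integer binomial coefficient taken via its image in `K`) if and only if `ℓ = n`.  Since the
graded injective hull `*E` of `K[x_1,…,x_n]/(x_1,…,x_n)` has `K`-basis the monomials `x^a`
with all `a_i ≤ −1`, graded so that `x^a` has degree `a_1+⋯+a_n+n`, this expresses that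
`*E(ℓ)` is Eulerian if and only if `ℓ = n`. -/
theorem shifted_E_eulerian_iff (K : Type*) [Field K] (n : ℕ) (hn : 1 ≤ n) (ℓ : ℤ) :
    (∀ r : ℕ, 1 ≤ r → ∀ a : Fin n → ℤ, (∀ i, a i ≤ -1) →
        leulerOp K n r (AddMonoidAlgebra.single a (1 : K)) =
          ((Ring.choose ((∑ i, a i) + n - ℓ) r : ℤ) : K) •
            AddMonoidAlgebra.single a (1 : K)) ↔ ℓ = n :=
  shifted_E_eulerian_iff_general K n ℓ
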